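/- With the notation below, suppose (Γ, s) is bipartite with bipartite ordering, with parts of sizes k₁ and k₂ = n − k₁, let D be the diagonal matrix whose first k₁ diagonal entries are 1 and whose last k₂ diagonal entries are −1, and let s̄(i) = −s(i). Then the Coxeter elements for the two sign labelings are conjugate: ω_{Γ,s} = D · ω_{Γ,s̄} · D. In particular, ω_{Γ,s} and ω_{Γ,s̄} have the same characteristic polynomial, and hence the same spectral radius: |ω_{Γ,s}| = |ω_{Γ,s̄}|. -/

import Mathlib

open Matrix

noncomputable section

/-- The Coxeter generator `s_i^{(t)}` for the sign labeling `t`: it agrees with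
the identity except in row `i`, where `(s_i^{(t)})_{ii} = −1` and
`(s_i^{(t)})_{ij} = t(i)·a_{ij}` for `j ≠ i`. -/
def coxGen (n : ℕ) (A : Matrix (Fin n) (Fin n) ℝ) (t : Fin n → ℝ) (i : Fin n) :
    Matrix (Fin n) (Fin n) ℝ :=
  fun j k =>
    if j = i then (if k = i then -1 else t i * A i k)
    else (if j = k then 1 else 0)

/-- The Coxeter element `ω_{Γ,t} = s_1^{(t)} ⋯ s_n^{(t)}`. -/
def coxElt (n : ℕ) (A : Matrix (Fin n) (Fin n) ℝ) (t : Fin n → ℝ) :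
    Matrix (Fin n) (Fin n) ℝ :=
  ((List.finRange n).map (coxGen n A t)).prod

/-- The spectral radius of a real square matrix: the maximum of `|z|` over the
complex roots `z` of its characteristic polynomial. -/
def specRad (n : ℕ) (M : Matrix (Fin n) (Fin n) ℝ) : ℝ :=
  sSup ((fun z : ℂ => ‖z‖) '' {z : ℂ | (M.charpoly.map (algebraMap ℝ ℂ)).IsRoot z})

/-! The idea: `D` anticommutes with the adjacency matrix of a bipartite graph, because
`D` is `±1` on the two parts and every edge joins the parts. Hence conjugating the
generator `s_i^{(s̄)}` by `D` flips the sign of its off-diagonal row entries, giving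
`s_i^{(s)}`, and conjugation by the involution `D` respects products and
characteristic polynomials. -/

theorem SemiconjBy.list_prod_map {M ι : Type*} [Monoid M] {a : M} {f g : ι → M}
    (h : ∀ i, SemiconjBy a (f i) (g i)) (l : List ι) :
    SemiconjBy a (l.map f).prod (l.map g).prod := by
  induction l with
  | nil => exact .one_right a
  | cons i l ih => simpa using (h i).mul_right ih

theorem Matrix.charpoly_mul_mul_of_mul_self_eq_one {ι R : Type*} [Fintype ι] [DecidableEq ι]
    [CommRing R] {D : Matrix ι ι R} (hD : D * D = 1) (M : Matrix ι ι R) :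
    (D * M * D).charpoly = M.charpoly := by
  rw [mul_assoc, charpoly_mul_comm, mul_assoc, hD, mul_one]

theorem semiconjBy_diagonal_coxGen {n : ℕ} {A : Matrix (Fin n) (Fin n) ℝ} {d : Fin n → ℝ}
    (hA : ∀ i k, d i * A i k = -(A i k * d k)) (t : Fin n → ℝ) (i : Fin n) :
    SemiconjBy (diagonal d) (coxGen n A (fun j => -(t j)) i) (coxGen n A t i) := by
  ext j k
  simp only [diagonal_mul, mul_diagonal, coxGen]
  by_cases hj : j = i
  · subst hj
    by_cases hk : k = j
    · simp [hk]
    · simp only [if_true, if_neg hk]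
      linear_combination (-t j) * hA j k
  · by_cases hjk : j = k
    · subst hjk
      simp [hj]
    · simp [hj, hjk]

theorem semiconjBy_diagonal_coxElt {n : ℕ} {A : Matrix (Fin n) (Fin n) ℝ} {d : Fin n → ℝ}
    (hA : ∀ i k, d i * A i k = -(A i k * d k)) (t : Fin n → ℝ) :
    SemiconjBy (diagonal d) (coxElt n A (fun j => -(t j))) (coxElt n A t) :=
  SemiconjBy.list_prod_map (semiconjBy_diagonal_coxGen hA t) _

theorem bipartite_sign_anticomm {n k₁ : ℕ} {A : Matrix (Fin n) (Fin n) ℝ}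
    (hbip : ∀ i j : Fin n, ((i : ℕ) < k₁ ↔ (j : ℕ) < k₁) → A i j = 0) (i k : Fin n) :
    (if (i : ℕ) < k₁ then 1 else -1) * A i k = -(A i k * if (k : ℕ) < k₁ then 1 else -1) := by
  by_cases hik : ((i : ℕ) < k₁ ↔ (k : ℕ) < k₁)
  · simp [hbip i k hik]
  · by_cases hi : (i : ℕ) < k₁
    · simp [hi, show ¬(k : ℕ) < k₁ by tauto]
    · simp [hi, show (k : ℕ) < k₁ by tauto]

theorem diagonal_sign_mul_self {n k₁ : ℕ} :
    diagonal (fun i : Fin n => if (i : ℕ) < k₁ then (1 : ℝ) else -1) *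
      diagonal (fun i : Fin n => if (i : ℕ) < k₁ then (1 : ℝ) else -1) = 1 := by
  rw [diagonal_mul_diagonal, ← diagonal_one]
  congr 1
  ext i
  split_ifs <;> norm_num

theorem stmt_10_general (n : ℕ) (A : Matrix (Fin n) (Fin n) ℝ)
    (s : Fin n → ℝ)
    (k₁ : ℕ)
    (hbip : ∀ i j : Fin n, ((i : ℕ) < k₁ ↔ (j : ℕ) < k₁) → A i j = 0)
    (D : Matrix (Fin n) (Fin n) ℝ)
    (hD : D = Matrix.diagonal (fun i : Fin n => if (i : ℕ) < k₁ then 1 else -1)) :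
    coxElt n A s = D * coxElt n A (fun i => -(s i)) * D ∧
    (coxElt n A s).charpoly = (coxElt n A (fun i => -(s i))).charpoly ∧
    specRad n (coxElt n A s) = specRad n (coxElt n A (fun i => -(s i))) := by
  have hDD : D * D = 1 := hD ▸ diagonal_sign_mul_self
  have hconj : coxElt n A s = D * coxElt n A (fun i => -(s i)) * D := by
    rw [hD, semiconjBy_diagonal_coxElt (bipartite_sign_anticomm hbip) s, mul_assoc, ← hD,
      hDD, mul_one]
  have hchar : (coxElt n A s).charpoly = (coxElt n A (fun i => -(s i))).charpoly := by
    rw [hconj, charpoly_mul_mul_of_mul_self_eq_one hDD]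
  exact ⟨hconj, hchar, by rw [specRad, hchar, specRad]⟩

theorem stmt_10 (n : ℕ) (hn : 1 ≤ n) (A : Matrix (Fin n) (Fin n) ℝ)
    (hsym : ∀ i j, A i j = A j i) (hdiag : ∀ i, A i i = 0)
    (h01 : ∀ i j, A i j = 0 ∨ A i j = 1)
    (s : Fin n → ℝ) (hs : ∀ i, s i = 1 ∨ s i = -1)
    (k₁ : ℕ) (hk₁ : 1 ≤ k₁) (hk₁n : k₁ < n)
    (hbip : ∀ i j : Fin n, ((i : ℕ) < k₁ ↔ (j : ℕ) < k₁) → A i j = 0)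
    (D : Matrix (Fin n) (Fin n) ℝ)
    (hD : D = Matrix.diagonal (fun i : Fin n => if (i : ℕ) < k₁ then 1 else -1)) :
    coxElt n A s = D * coxElt n A (fun i => -(s i)) * D ∧
    (coxElt n A s).charpoly = (coxElt n A (fun i => -(s i))).charpoly ∧
    specRad n (coxElt n A s) = specRad n (coxElt n A (fun i => -(s i))) :=
  stmt_10_general n A s k₁ hbip D hD

end
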